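/- arXiv:2309.10452 — 2 statements merged into one kernel-verified Lean document; each statement's English description precedes it below -/
import Mathlib

section
/- Let E be a torsion-free module over a domain R. Then E is e-injective if and only if for every short e-exact sequence 0 → A →ⁱ B →ᵖ C → 0, the induced sequence 0 → Hom(C,E) →^{p*} Hom(B,E) →^{i*} Hom(A,E) → 0 is e-exact. -/
universe u

variable {R : Type u} [CommRing R] [IsDomain R]

/-- `N` is an essential submodule of `N'` (both submodules of `M`). -/
def EssentialIn {M : Type*} [AddCommGroup M] [Module R M] (N N' : Submodule R M) : Prop :=
  N ≤ N' ∧ ∀ K : Submodule R M, K ≤ N' → K ≠ ⊥ → N ⊓ K ≠ ⊥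

/-- An `R`-module `E` is e-injective. -/
def IsEInjective (E : Type u) [AddCommGroup E] [Module R E] : Prop :=
  ∀ (A₁ A₂ : Type u) [AddCommGroup A₁] [AddCommGroup A₂] [Module R A₁] [Module R A₂]
    (f₁ : A₁ →ₗ[R] A₂), Function.Injective f₁ →
    ∀ f₂ : A₁ →ₗ[R] E, ∃ r : R, r ≠ 0 ∧ ∃ f₃ : A₂ →ₗ[R] E, ∀ a : A₁, f₃ (f₁ a) = r • f₂ a


private lemma vanish_aux {E : Type u} [AddCommGroup E] [Module R E]
    (htf : ∀ (r : R) (x : E), r • x = 0 → r ≠ 0 → x = 0)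
    {M : Type u} [AddCommGroup M] [Module R M] {N N' : Submodule R M}
    (h : EssentialIn (R := R) N N') (g : M →ₗ[R] E)
    (hg : ∀ x ∈ N, g x = 0) : ∀ x ∈ N', g x = 0 := by
  intro x hx
  by_cases hx0 : x = 0
  · simp [hx0]
  · have hKle : Submodule.span R {x} ≤ N' := by
      rw [Submodule.span_singleton_le_iff_mem]; exact hx
    have hKne : Submodule.span R {x} ≠ ⊥ := by
      simpa [Submodule.span_singleton_eq_bot] using hx0
    obtain ⟨y, hy, hy0⟩ := (Submodule.ne_bot_iff _).mp (h.2 _ hKle hKne)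
    obtain ⟨hyN, hyK⟩ := Submodule.mem_inf.mp hy
    obtain ⟨r, hr⟩ := Submodule.mem_span_singleton.mp hyK
    have hr0 : r ≠ 0 := by rintro rfl; rw [zero_smul] at hr; exact hy0 hr.symm
    have hrg : r • g x = 0 := by rw [← map_smul, hr]; exact hg y hyN
    exact htf r (g x) hrg hr0

/-- a torsion-free module `E` over a domain is e-injective iff `Hom(-, E)`
sends every short e-exact sequence to a short e-exact sequence. -/
theorem eInjective_iff_hom_eExact (E : Type u) [AddCommGroup E] [Module R E]
    (htf : ∀ (r : R) (x : E), r • x = 0 → r ≠ 0 → x = 0) :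
    IsEInjective (R := R) E ↔
      ∀ (A B C : Type u) [AddCommGroup A] [AddCommGroup B] [AddCommGroup C]
        [Module R A] [Module R B] [Module R C]
        (i : A →ₗ[R] B) (p : B →ₗ[R] C),
        Function.Injective i →
        EssentialIn (R := R) (LinearMap.range i) (LinearMap.ker p) →
        EssentialIn (R := R) (LinearMap.range p) (⊤ : Submodule R C) →
        (Function.Injective (LinearMap.lcomp R E p) ∧
          EssentialIn (R := R) (LinearMap.range (LinearMap.lcomp R E p))
            (LinearMap.ker (LinearMap.lcomp R E i)) ∧
          EssentialIn (R := R) (LinearMap.range (LinearMap.lcomp R E i))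
            (⊤ : Submodule R (A →ₗ[R] E))) := by
  constructor
  · intro hE A B C _ _ _ _ _ _ i p hi hess1 hess2
    refine ⟨?_, ⟨?_, ?_⟩, ?_, ?_⟩
    · -- injectivity of p*
      rw [← LinearMap.ker_eq_bot, LinearMap.ker_eq_bot']
      intro g hg
      ext c
      have hv : ∀ x ∈ LinearMap.range p, g x = 0 := by
        rintro x ⟨b, rfl⟩
        exact congrFun (congrArg DFunLike.coe hg) b
      exact vanish_aux htf hess2 g hv c trivial
    · -- range p* ≤ ker i*
      rintro g ⟨h, rfl⟩
      simp only [LinearMap.mem_ker]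
      ext a
      have : i a ∈ LinearMap.ker p := hess1.1 ⟨a, rfl⟩
      simp [LinearMap.mem_ker.mp this]
    · -- essentiality in the middle
      intro K hK hKne
      obtain ⟨g, hgK, hg0⟩ := (Submodule.ne_bot_iff _).mp hKne
      have hgker : LinearMap.lcomp R E i g = 0 := hK hgK
      have hgri : ∀ x ∈ LinearMap.range i, g x = 0 := by
        rintro x ⟨a, rfl⟩
        exact congrFun (congrArg DFunLike.coe hgker) a
      have hgkerp : ∀ x ∈ LinearMap.ker p, g x = 0 := vanish_aux htf hess1 g hgri
      -- factor g through range p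
      let q : (B ⧸ LinearMap.ker p) →ₗ[R] E :=
        Submodule.liftQ (LinearMap.ker p) g (fun x hx => hgkerp x hx)
      let e := LinearMap.quotKerEquivRange p
      let gbar : (LinearMap.range p) →ₗ[R] E := q.comp (e.symm : _ →ₗ[R] _)
      obtain ⟨r, hr0, h, hcomp⟩ := hE (LinearMap.range p) C
        (LinearMap.range p).subtype (Submodule.injective_subtype _) gbar
      have key : ∀ b : B, h (p b) = r • g b := by
        intro b
        have h1 := hcomp ⟨p b, ⟨b, rfl⟩⟩
        have h2 : gbar ⟨p b, ⟨b, rfl⟩⟩ = g b := by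
          have : e (Submodule.Quotient.mk b) = ⟨p b, ⟨b, rfl⟩⟩ := by
            apply Subtype.ext
            simp [e, LinearMap.quotKerEquivRange]
          have hsymm : e.symm ⟨p b, ⟨b, rfl⟩⟩ = Submodule.Quotient.mk b :=
            e.symm_apply_eq.mpr this.symm
          simp only [gbar, LinearMap.comp_apply, LinearEquiv.coe_coe, hsymm]
          simp [q]
          rfl
        simpa [h2] using h1
      have hrg0 : r • g ≠ 0 := by
        intro hz
        apply hg0
        ext b
        have : r • g b = 0 := by
          have := congrFun (congrArg DFunLike.coe hz) b; simpa using this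
        exact htf r (g b) this hr0
      refine (Submodule.ne_bot_iff _).mpr ⟨r • g, Submodule.mem_inf.mpr ⟨⟨h, ?_⟩, K.smul_mem r hgK⟩, hrg0⟩
      ext b
      simpa using key b
    · exact le_top
    · -- essentiality of range i* in ⊤
      intro K _ hKne
      obtain ⟨g, hgK, hg0⟩ := (Submodule.ne_bot_iff _).mp hKne
      obtain ⟨r, hr0, h, hcomp⟩ := hE A B i hi g
      have hrg0 : r • g ≠ 0 := by
        intro hz
        apply hg0
        ext a
        have : r • g a = 0 := by
          have := congrFun (congrArg DFunLike.coe hz) a; simpa using this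
        exact htf r (g a) this hr0
      refine (Submodule.ne_bot_iff _).mpr ⟨r • g, Submodule.mem_inf.mpr ⟨⟨h, ?_⟩, K.smul_mem r hgK⟩, hrg0⟩
      ext a
      simpa using hcomp a
  · intro H A₁ A₂ _ _ _ _ f₁ hf₁ f₂
    by_cases hf₂ : f₂ = 0
    · exact ⟨1, one_ne_zero, 0, fun a => by simp [hf₂]⟩
    · set p := (LinearMap.range f₁).mkQ
      have hk : LinearMap.ker p = LinearMap.range f₁ := Submodule.ker_mkQ _
      have hr : LinearMap.range p = ⊤ := Submodule.range_mkQ _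
      have hess1 : EssentialIn (R := R) (LinearMap.range f₁) (LinearMap.ker p) := by
        rw [hk]
        exact ⟨le_refl _, fun K hKle hKne => by rwa [inf_eq_right.mpr hKle]⟩
      have hess2 : EssentialIn (R := R) (LinearMap.range p) (⊤ : Submodule R _) := by
        rw [hr]
        exact ⟨le_refl _, fun K hKle hKne => by rwa [inf_eq_right.mpr hKle]⟩
      obtain ⟨-, -, -, hess⟩ := H A₁ A₂ (A₂ ⧸ LinearMap.range f₁) f₁ p hf₁ hess1 hess2
      have hKle : Submodule.span R {f₂} ≤ (⊤ : Submodule R (A₁ →ₗ[R] E)) := le_top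
      have hKne : Submodule.span R {f₂} ≠ ⊥ := by
        simpa [Submodule.span_singleton_eq_bot] using hf₂
      obtain ⟨g, hg, hg0⟩ := (Submodule.ne_bot_iff _).mp (hess _ hKle hKne)
      obtain ⟨hgr, hgs⟩ := Submodule.mem_inf.mp hg
      obtain ⟨f₃, hf₃⟩ := hgr
      obtain ⟨r, hrg⟩ := Submodule.mem_span_singleton.mp hgs
      have hr0 : r ≠ 0 := by rintro rfl; rw [zero_smul] at hrg; exact hg0 hrg.symm
      refine ⟨r, hr0, f₃, fun a => ?_⟩
      have h1 : f₃ (f₁ a) = g a := by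
        rw [← hf₃]; rfl
      rw [h1, ← hrg]; rfl
end

section
/- (Nine lemma for e-exact sequences, bottom row) Consider a commutative 3×3 diagram of modules over a domain R in which all three columns and the first and second rows are e-exact, and C, C', C'' (the modules of the third row) are torsion-free. Then the third row 0 → C → C' → C'' → 0 is also e-exact. -/
universe u

variable {R : Type u} [CommRing R] [IsDomain R]

/-- The sequence `0 → X → Y → Z → 0` is e-exact. -/
def EExactShort {X Y Z : Type u} [AddCommGroup X] [AddCommGroup Y] [AddCommGroup Z]
    [Module R X] [Module R Y] [Module R Z] (f : X →ₗ[R] Y) (g : Y →ₗ[R] Z) : Prop :=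
  Function.Injective f ∧
    EssentialIn (R := R) (LinearMap.range f) (LinearMap.ker g) ∧
    EssentialIn (R := R) (LinearMap.range g) (⊤ : Submodule R Z)

lemma essentialIn_elem {M : Type u} [AddCommGroup M] [Module R M] {N N' : Submodule R M}
    (hN : EssentialIn (R := R) N N') {x : M} (hx : x ∈ N') (hx0 : x ≠ 0) :
    ∃ r : R, r • x ∈ N ∧ r • x ≠ 0 := by
  have hK : Submodule.span R {x} ≤ N' := by
    rw [Submodule.span_le]; simpa using hx
  have hKne : Submodule.span R {x} ≠ ⊥ := by
    intro hbot
    have hxm : x ∈ Submodule.span R {x} := Submodule.mem_span_singleton_self x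
    rw [hbot] at hxm; exact hx0 (by simpa using hxm)
  have hne := hN.2 _ hK hKne
  rcases (Submodule.ne_bot_iff _).1 hne with ⟨y, hy, hy0⟩
  rcases Submodule.mem_span_singleton.1 hy.2 with ⟨r, rfl⟩
  exact ⟨r, hy.1, hy0⟩

lemma essentialIn_of_elem {M : Type u} [AddCommGroup M] [Module R M] {N N' : Submodule R M}
    (hle : N ≤ N') (H : ∀ x ∈ N', x ≠ 0 → ∃ r : R, r • x ∈ N ∧ r • x ≠ 0) :
    EssentialIn (R := R) N N' := by
  refine ⟨hle, fun K hK hKne hbot => ?_⟩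
  rcases (Submodule.ne_bot_iff K).1 hKne with ⟨x, hxK, hx0⟩
  rcases H x (hK hxK) hx0 with ⟨r, hrN, hr0⟩
  have hmem : r • x ∈ N ⊓ K := ⟨hrN, K.smul_mem r hxK⟩
  rw [hbot] at hmem
  exact hr0 (by simpa using hmem)

lemma essential_top_elem {M : Type u} [AddCommGroup M] [Module R M] {N : Submodule R M}
    (hN : EssentialIn (R := R) N ⊤) (x : M) : ∃ r : R, r ≠ 0 ∧ r • x ∈ N := by
  by_cases hx : x = 0
  · exact ⟨1, one_ne_zero, by simp [hx]⟩
  · rcases essentialIn_elem hN Submodule.mem_top hx with ⟨r, hrN, hr0⟩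
    exact ⟨r, fun hr => hr0 (by simp [hr]), hrN⟩

lemma ne_zero_of_smul_ne_zero {M : Type u} [AddCommGroup M] [Module R M] {r : R} {x : M}
    (hx : r • x ≠ 0) : r ≠ 0 := fun hr => hx (by simp [hr])

/-- nine lemma for e-exact sequences, bottom row. -/
theorem nine_lemma_bottom_row
    {A A' A'' B B' B'' C C' C'' : Type u}
    [AddCommGroup A] [AddCommGroup A'] [AddCommGroup A'']
    [AddCommGroup B] [AddCommGroup B'] [AddCommGroup B'']
    [AddCommGroup C] [AddCommGroup C'] [AddCommGroup C'']
    [Module R A] [Module R A'] [Module R A'']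
    [Module R B] [Module R B'] [Module R B'']
    [Module R C] [Module R C'] [Module R C'']
    -- rows
    (f : A →ₗ[R] A') (f' : A' →ₗ[R] A'')
    (g : B →ₗ[R] B') (g' : B' →ₗ[R] B'')
    (h : C →ₗ[R] C') (h' : C' →ₗ[R] C'')
    -- columns
    (i : A →ₗ[R] B) (i' : B →ₗ[R] C)
    (j : A' →ₗ[R] B') (j' : B' →ₗ[R] C')
    (p : A'' →ₗ[R] B'') (p' : B'' →ₗ[R] C'')
    -- commuting squares
    (sq₁ : ∀ a : A, g (i a) = j (f a))
    (sq₂ : ∀ a' : A', g' (j a') = p (f' a'))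
    (sq₃ : ∀ b : B, h (i' b) = j' (g b))
    (sq₄ : ∀ b' : B', h' (j' b') = p' (g' b'))
    -- columns e-exact
    (col₁ : EExactShort (R := R) i i')
    (col₂ : EExactShort (R := R) j j')
    (col₃ : EExactShort (R := R) p p')
    -- first and second rows e-exact
    (row₁ : EExactShort (R := R) f f')
    (row₂ : EExactShort (R := R) g g')
    -- torsion-freeness of C, C' and C''
    (htfC : ∀ (r : R) (x : C), r • x = 0 → r ≠ 0 → x = 0)
    (htfC' : ∀ (r : R) (x : C'), r • x = 0 → r ≠ 0 → x = 0)
    (htfC'' : ∀ (r : R) (x : C''), r • x = 0 → r ≠ 0 → x = 0) :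
    EExactShort (R := R) h h' := by
  obtain ⟨hi_inj, hi_ess, hi'_ess⟩ := col₁
  obtain ⟨hj_inj, hj_ess, hj'_ess⟩ := col₂
  obtain ⟨hp_inj, hp_ess, hp'_ess⟩ := col₃
  obtain ⟨hf_inj, hf_ess, hf'_ess⟩ := row₁
  obtain ⟨hg_inj, hg_ess, hg'_ess⟩ := row₂
  -- compositions vanish
  have hii' : ∀ a : A, i' (i a) = 0 := fun a => hi_ess.1 ⟨a, rfl⟩
  have hjj' : ∀ a' : A', j' (j a') = 0 := fun a' => hj_ess.1 ⟨a', rfl⟩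
  have hgg' : ∀ b : B, g' (g b) = 0 := fun b => hg_ess.1 ⟨b, rfl⟩
  -- (1) h is injective
  have hinj : Function.Injective h := by
    rw [injective_iff_map_eq_zero]
    intro c hc
    obtain ⟨r, hr0, b, hb⟩ := essential_top_elem hi'_ess c
    -- hb : i' b = r • c
    have hgb_ker : g b ∈ LinearMap.ker j' := by
      rw [LinearMap.mem_ker, ← sq₃ b, hb, map_smul, hc, smul_zero]
    by_cases hgb : g b = 0
    · have hb0 : b = 0 := hg_inj (by simpa using hgb)
      have : r • c = 0 := by rw [← hb, hb0, map_zero]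
      exact htfC r c this hr0
    · obtain ⟨s, ⟨a', ha'⟩, hsne⟩ := essentialIn_elem hj_ess hgb_ker hgb
      have hs0 : s ≠ 0 := ne_zero_of_smul_ne_zero hsne
      -- ha' : j a' = s • g b
      have hfa' : f' a' = 0 := by
        apply hp_inj
        rw [map_zero, ← sq₂ a', ha', ← map_smul, hgg']
      obtain ⟨t, ⟨a, ha⟩, htne⟩ := essentialIn_elem hf_ess (LinearMap.mem_ker.2 hfa')
        (fun h0 => hsne (by rw [← ha', h0, map_zero]))
      have ht0 : t ≠ 0 := ne_zero_of_smul_ne_zero htne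
      -- ha : f a = t • a'
      have hia : i a = (t * s) • b := by
        apply hg_inj
        rw [sq₁, ha, map_smul j, ha', smul_smul, ← map_smul g]
      have : (t * s * r) • c = 0 := by
        have := hii' a
        rw [hia, map_smul, hb, smul_smul] at this
        exact this
      exact htfC _ c this (by simp [ht0, hs0, hr0])
  refine ⟨hinj, ?_, ?_⟩
  · -- (2)+(3) range h essential in ker h'
    have hle : LinearMap.range h ≤ LinearMap.ker h' := by
      rintro _ ⟨c, rfl⟩
      obtain ⟨r, hr0, b, hb⟩ := essential_top_elem hi'_ess c
      have : r • h' (h c) = 0 := by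
        rw [← map_smul, ← map_smul, ← hb, sq₃, sq₄, hgg', map_zero]
      exact LinearMap.mem_ker.2 (htfC'' r _ this hr0)
    refine essentialIn_of_elem hle ?_
    intro c' hc' hc'0
    obtain ⟨r₁, hr₁0, b', hb'⟩ := essential_top_elem hj'_ess c'
    -- hb' : j' b' = r₁ • c'
    have hg'b' : g' b' ∈ LinearMap.ker p' := by
      rw [LinearMap.mem_ker, ← sq₄ b', hb', map_smul, LinearMap.mem_ker.1 hc', smul_zero]
    by_cases hgb'0 : g' b' = 0
    · -- b' ∈ ker g'
      by_cases hb'0 : b' = 0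
      · exact absurd (htfC' r₁ c' (by rw [← hb', hb'0, map_zero]) hr₁0) hc'0
      · obtain ⟨t, ⟨b, hbb⟩, htne⟩ := essentialIn_elem hg_ess (LinearMap.mem_ker.2 hgb'0) hb'0
        have ht0 : t ≠ 0 := ne_zero_of_smul_ne_zero htne
        -- hbb : g b = t • b'
        refine ⟨t * r₁, ⟨i' b, ?_⟩, ?_⟩
        · rw [sq₃, hbb, map_smul, hb', smul_smul]
        · exact fun h0 => hc'0 (htfC' _ c' h0 (by simp [ht0, hr₁0]))
    · obtain ⟨s, ⟨a'', ha''⟩, hsne⟩ := essentialIn_elem hp_ess hg'b' hgb'0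
      have hs0 : s ≠ 0 := ne_zero_of_smul_ne_zero hsne
      -- ha'' : p a'' = s • g' b'
      have ha''0 : a'' ≠ 0 := fun h0 => hsne (by rw [← ha'', h0, map_zero])
      obtain ⟨u, ⟨a₁', ha₁'⟩, hune⟩ := essentialIn_elem hf'_ess (Submodule.mem_top (x := a'')) ha''0
      have hu0 : u ≠ 0 := ne_zero_of_smul_ne_zero hune
      -- ha₁' : f' a₁' = u • a''
      have hdker : (u * s) • b' - j a₁' ∈ LinearMap.ker g' := by
        rw [LinearMap.mem_ker, map_sub, map_smul, sq₂, ha₁', map_smul, ha'',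
          smul_smul, sub_self]
      by_cases hd0 : (u * s) • b' - j a₁' = 0
      · -- then (u*s) • b' ∈ range j, so (u*s*r₁) • c' = 0, contradiction
        have heq : (u * s) • b' = j a₁' := by rwa [sub_eq_zero] at hd0
        have hzero : ((u * s) * r₁) • c' = 0 := by
          rw [← smul_smul, ← hb', ← map_smul, heq, hjj']
        exact absurd (htfC' _ c' hzero (by simp [hu0, hs0, hr₁0])) hc'0
      · obtain ⟨v, ⟨b, hbb⟩, hvne⟩ := essentialIn_elem hg_ess hdker hd0
        have hv0 : v ≠ 0 := ne_zero_of_smul_ne_zero hvne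
        refine ⟨v * u * s * r₁, ⟨i' b, ?_⟩, ?_⟩
        · rw [sq₃, hbb, map_smul, map_sub, map_smul, hjj', sub_zero, hb',
            smul_smul, smul_smul]
          congr 1
          ring
        · exact fun h0 => hc'0 (htfC' _ c' h0 (by simp [hv0, hu0, hs0, hr₁0]))
  · -- (4) range h' essential in ⊤
    refine essentialIn_of_elem le_top ?_
    intro c'' _ hc''0
    obtain ⟨r₁, hr₁0, b'', hb''⟩ := essential_top_elem hp'_ess c''
    have hb''0 : b'' ≠ 0 := fun h0 => hc''0 (htfC'' r₁ c'' (by rw [← hb'', h0, map_zero]) hr₁0)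
    obtain ⟨r₂, ⟨b', hb'⟩, hr₂ne⟩ := essentialIn_elem hg'_ess (Submodule.mem_top (x := b'')) hb''0
    have hr₂0 : r₂ ≠ 0 := ne_zero_of_smul_ne_zero hr₂ne
    refine ⟨r₂ * r₁, ⟨j' b', ?_⟩, ?_⟩
    · rw [sq₄, hb', map_smul, hb'', smul_smul]
    · exact fun h0 => hc''0 (htfC'' _ c'' h0 (by simp [hr₂0, hr₁0]))
end
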